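/- If 𝓘 ∈ 𝒟(I), then there exists a finite pairwise disjoint family U₀ of subsets of I, each not in 𝓘, such that: (1) for each M ∈ U₀ and each I' ⊆ M, either I' ∈ 𝓘 or M \ I' ∈ 𝓘; and (2) every subset of I \ ⋃U₀ belongs to 𝓘. -/

import Mathlib

/-! Axiom (5) forces every pairwise disjoint family of sets outside `𝓘` to be finite. Hence every
set outside `𝓘` contains an atom, i.e. a set outside `𝓘` that does not split into two sets outside
`𝓘`: otherwise splitting off such pieces forever yields an infinite disjoint family of them. By Zorn
there is a maximal disjoint family of atoms; it is finite, and the complement of its union contains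
no atom, so all of its subsets lie in `𝓘`. -/

/-- The class `𝒟(I)` of ideals appearing in studies of Chase's lemma. -/
def IsChaseIdeal {I : Type*} (𝓘 : Set (Set I)) : Prop :=
  Set.univ ∉ 𝓘 ∧
  (∀ s : Set I, s.Finite → s ∈ 𝓘) ∧
  (∀ s t : Set I, s ∈ 𝓘 → t ∈ 𝓘 → s ∪ t ∈ 𝓘) ∧
  (∀ s t : Set I, s ∈ 𝓘 → t ⊆ s → t ∈ 𝓘) ∧
  (∀ U : Set (Set I), U.Countable → U.PairwiseDisjoint id →
    ∃ U₀ ⊆ U, U₀.Finite ∧ ⋃₀ (U \ U₀) ∈ 𝓘)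

open Set Function

theorem Set.pairwise_disjoint_of_succ_subset_sdiff {α : Type*} {A B : ℕ → Set α}
    (hA : ∀ n, A n ⊆ B n) (hB : ∀ n, B (n + 1) ⊆ B n \ A n) : Pairwise (Disjoint on A) := by
  have hanti : Antitone B := antitone_nat_of_succ_le fun n => (hB n).trans sdiff_subset
  have hlt : ∀ m n, m < n → Disjoint (A m) (A n) := fun m n hmn =>
    disjoint_sdiff_right.mono_right <| (hA n).trans <| (hanti hmn).trans (hB m)
  intro m n hmn
  rcases hmn.lt_or_gt with h | h
  exacts [hlt m n h, (hlt n m h).symm]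

theorem Set.exists_maximal_pairwiseDisjoint_subset {α : Type*} (S : Set (Set α)) :
    ∃ U, Maximal (fun U : Set (Set α) => U ⊆ S ∧ U.PairwiseDisjoint id) U := by
  refine zorn_subset _ fun c hcS hchain => ⟨⋃₀ c, ⟨sUnion_subset fun U hU => (hcS hU).1, ?_⟩,
    fun U => subset_sUnion_of_mem⟩
  exact (pairwiseDisjoint_sUnion hchain.directedOn).2 fun U hU => (hcS hU).2

theorem Set.eq_empty_of_maximal_pairwiseDisjoint_subset {α : Type*} {S U : Set (Set α)}
    (hU : Maximal (fun U : Set (Set α) => U ⊆ S ∧ U.PairwiseDisjoint id) U) {A : Set α}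
    (hA : A ∈ S) (hAU : Disjoint A (⋃₀ U)) : A = ∅ := by
  have hdisj : ∀ M ∈ U, Disjoint A M := fun M hM => hAU.mono_right (subset_sUnion_of_mem hM)
  have hmem : A ∈ U := hU.2 ⟨insert_subset hA hU.1.1,
    hU.1.2.insert fun M hM _ => hdisj M hM⟩ (subset_insert A U) (mem_insert A U)
  exact disjoint_self.1 (hdisj A hmem)

def IsChaseAtom {I : Type*} (𝓘 : Set (Set I)) (M : Set I) : Prop :=
  M ∉ 𝓘 ∧ ∀ I' ⊆ M, I' ∈ 𝓘 ∨ M \ I' ∈ 𝓘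

namespace IsChaseIdeal

variable {I : Type*} {𝓘 : Set (Set I)}

theorem empty_mem (h𝓘 : IsChaseIdeal 𝓘) : ∅ ∈ 𝓘 := h𝓘.2.1 ∅ finite_empty

theorem mem_of_subset (h𝓘 : IsChaseIdeal 𝓘) {s t : Set I} (hs : s ∈ 𝓘) (hts : t ⊆ s) : t ∈ 𝓘 :=
  h𝓘.2.2.2.1 s t hs hts

theorem exists_mem_of_pairwise_disjoint (h𝓘 : IsChaseIdeal 𝓘) {A : ℕ → Set I}
    (hA : Pairwise (Disjoint on A)) : ∃ n, A n ∈ 𝓘 := by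
  by_contra! hbad
  have hinj : Function.Injective A := fun m n hmn => by
    by_contra hne
    have hdisj : Disjoint (A m) (A m) := by simpa only [onFun, hmn] using hA hne
    exact hbad m (disjoint_self.1 hdisj ▸ h𝓘.empty_mem)
  obtain ⟨V₀, -, hV₀fin, hmem⟩ := h𝓘.2.2.2.2 (range A) (countable_range A) hA.range_pairwise
  obtain ⟨M, hMA, hMV₀⟩ := ((infinite_range_of_injective hinj).sdiff hV₀fin).nonempty
  obtain ⟨n, rfl⟩ := hMA
  exact hbad n (h𝓘.mem_of_subset hmem (subset_sUnion_of_mem ⟨⟨n, rfl⟩, hMV₀⟩))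

theorem finite_of_pairwiseDisjoint (h𝓘 : IsChaseIdeal 𝓘) {U : Set (Set I)}
    (hU : U.PairwiseDisjoint id) (hbad : ∀ M ∈ U, M ∉ 𝓘) : U.Finite := by
  by_contra hinf
  let e := Set.Infinite.natEmbedding U hinf
  obtain ⟨n, hn⟩ := h𝓘.exists_mem_of_pairwise_disjoint (A := fun n => (e n : Set I))
    fun m n hmn => hU (e m).2 (e n).2 (Subtype.val_injective.ne (e.injective.ne hmn))
  exact hbad _ (e n).2 hn

theorem exists_isChaseAtom_subset (h𝓘 : IsChaseIdeal 𝓘) {M : Set I} (hM : M ∉ 𝓘) :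
    ∃ A ⊆ M, IsChaseAtom 𝓘 A := by
  by_contra! hnot
  have split : ∀ B ⊆ M, B ∉ 𝓘 → ∃ C ⊆ B, C ∉ 𝓘 ∧ B \ C ∉ 𝓘 := fun B hBM hB => by
    simpa [IsChaseAtom, hB] using hnot B hBM
  choose! C hCB hC hBC using split
  let B : ℕ → Set I := fun n => Nat.rec M (fun _ B => B \ C B) n
  have hB : ∀ n, B n ⊆ M ∧ B n ∉ 𝓘 := by
    intro n
    induction n with
    | zero => exact ⟨subset_rfl, hM⟩
    | succ n ih => exact ⟨sdiff_subset.trans ih.1, hBC _ ih.1 ih.2⟩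
  obtain ⟨n, hn⟩ := h𝓘.exists_mem_of_pairwise_disjoint (A := fun n => C (B n))
    (pairwise_disjoint_of_succ_subset_sdiff (fun n => hCB _ (hB n).1 (hB n).2) fun _ => subset_rfl)
  exact hC _ (hB n).1 (hB n).2 hn

end IsChaseIdeal

theorem chase_finite_maximal_disjoint_system {I : Type*} (𝓘 : Set (Set I))
    (h𝓘 : IsChaseIdeal 𝓘) :
    ∃ U₀ : Set (Set I), U₀.Finite ∧ U₀.PairwiseDisjoint id ∧
      (∀ M ∈ U₀, M ∉ 𝓘) ∧
      (∀ M ∈ U₀, ∀ I' ⊆ M, I' ∈ 𝓘 ∨ M \ I' ∈ 𝓘) ∧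
      (∀ s : Set I, s ⊆ (⋃₀ U₀)ᶜ → s ∈ 𝓘) := by
  obtain ⟨U₀, hU₀⟩ := exists_maximal_pairwiseDisjoint_subset {M | IsChaseAtom 𝓘 M}
  have hbad : ∀ M ∈ U₀, M ∉ 𝓘 := fun M hM => (hU₀.1.1 hM).1
  refine ⟨U₀, h𝓘.finite_of_pairwiseDisjoint hU₀.1.2 hbad, hU₀.1.2, hbad,
    fun M hM => (hU₀.1.1 hM).2, fun s hs => ?_⟩
  by_contra hs𝓘
  obtain ⟨A, hAs, hA⟩ := h𝓘.exists_isChaseAtom_subset hs𝓘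
  have hA_empty : A = ∅ := eq_empty_of_maximal_pairwiseDisjoint_subset hU₀ hA
    (subset_compl_iff_disjoint_right.1 (hAs.trans hs))
  exact hA.1 (hA_empty ▸ h𝓘.empty_mem)
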